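/- For every pair x, y ∈ 𝔻 there exists exactly one point m ∈ 𝔻 such that φ_m(x) = −φ_m(y). -/

import Mathlib

/-- The open unit disc in the complex plane. -/
def Disc : Set ℂ := {z : ℂ | ‖z‖ < 1}

/-- The geodesic symmetry `φ_a(z) = (a - z)/(1 - conj(a)·z)`. -/
noncomputable def phi (a z : ℂ) : ℂ := (a - z) / (1 - (starRingEnd ℂ) a * z)

/-!
Clearing denominators, `φ_m(x) = -φ_m(y)` reads `2m + 2 conj(m) xy = (x + y)(1 + |m|²)`.
Eliminating `conj m` with the conjugate equation shows that this holds exactly when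
`2m / (1 + |m|²) = w`, where `w = (s - p conj s) / (1 - |p|²)` with `s = x + y`, `p = xy`.
The map `m ↦ 2m / (1 + |m|²)` doubles the hyperbolic distance to `0` along rays, so it is a
bijection of the disc with inverse `w ↦ w / (1 + √(1 - |w|²))`; and `|w| < 1` because
`|s - p conj s| ≤ (|x| + |y|)(1 - |x||y|)` while `1 - |p|² = (1 + |x||y|)(1 - |x||y|)`.
-/

open ComplexConjugate

noncomputable def hypDouble (m : ℂ) : ℂ := 2 * m / (1 + ‖m‖ ^ 2)

noncomputable def doubledMidpoint (x y : ℂ) : ℂ :=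
  (x + y - x * y * conj (x + y)) / (1 - ‖x * y‖ ^ 2)

lemma norm_mul_lt_one {a z : ℂ} (ha : a ∈ Disc) (hz : z ∈ Disc) : ‖a * z‖ < 1 := by
  rw [norm_mul]
  exact mul_lt_one_of_nonneg_of_lt_one_left (norm_nonneg a) ha hz.le

lemma one_sub_conj_mul_ne_zero {a z : ℂ} (ha : a ∈ Disc) (hz : z ∈ Disc) :
    1 - conj a * z ≠ 0 := by
  have hnorm : ‖conj a * z‖ = ‖a * z‖ := by rw [norm_mul, norm_mul, Complex.norm_conj]
  refine sub_ne_zero.2 fun h => (norm_mul_lt_one ha hz).ne ?_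
  rw [← hnorm, ← h, norm_one]

lemma one_add_sq_norm_ne_zero (m : ℂ) : (1 : ℂ) + ‖m‖ ^ 2 ≠ 0 := by
  exact_mod_cast (by positivity : (1 : ℝ) + ‖m‖ ^ 2 ≠ 0)

lemma phi_eq_neg_phi_iff {m x y : ℂ} (hx : 1 - conj m * x ≠ 0) (hy : 1 - conj m * y ≠ 0) :
    phi m x = -phi m y ↔ 2 * m + 2 * conj m * (x * y) = (x + y) * (1 + ‖m‖ ^ 2) := by
  rw [phi, phi, ← neg_div, div_eq_div_iff hx hy, ← Complex.mul_conj']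
  constructor <;> intro h <;> linear_combination h

lemma midpoint_equation_iff_hypDouble_eq {m x y : ℂ} (hxy : ‖x * y‖ ≠ 1) :
    2 * m + 2 * conj m * (x * y) = (x + y) * (1 + ‖m‖ ^ 2) ↔
      hypDouble m = doubledMidpoint x y := by
  have hp : (1 : ℂ) - ‖x * y‖ ^ 2 ≠ 0 := by
    rw [sub_ne_zero, ne_comm]
    exact_mod_cast (pow_eq_one_iff_of_nonneg (norm_nonneg _) two_ne_zero).not.2 hxy
  have hpc : x * y * (conj x * conj y) = ‖x * y‖ ^ 2 := by
    rw [← map_mul, Complex.mul_conj']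
  rw [hypDouble, doubledMidpoint, div_eq_div_iff (one_add_sq_norm_ne_zero m) hp, map_add]
  constructor
  · intro h
    have hc := congrArg conj h
    simp only [map_add, map_mul, map_ofNat, Complex.conj_conj, map_pow, Complex.conj_ofReal,
      map_one] at hc
    linear_combination h - x * y * hc + 2 * m * hpc
  · intro h
    have hc := congrArg conj h
    simp only [map_add, map_mul, map_ofNat, Complex.conj_conj, map_pow, Complex.conj_ofReal,
      map_one, map_sub] at hc
    apply mul_left_cancel₀ hp
    linear_combination h + x * y * hc - (x + y) * (1 + ‖m‖ ^ 2) * hpc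

lemma doubledMidpoint_mem_disc {x y : ℂ} (hx : x ∈ Disc) (hy : y ∈ Disc) :
    doubledMidpoint x y ∈ Disc := by
  have ha : ‖x‖ < 1 := hx
  have hb : ‖y‖ < 1 := hy
  have ha0 := norm_nonneg x
  have hb0 := norm_nonneg y
  have hab : ‖x‖ * ‖y‖ < 1 := mul_lt_one_of_nonneg_of_lt_one_left ha0 ha hb.le
  have hnum : x + y - x * y * conj (x + y) =
      x * ((1 - ‖y‖ ^ 2 : ℝ) : ℂ) + y * ((1 - ‖x‖ ^ 2 : ℝ) : ℂ) := by
    push_cast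
    rw [map_add, ← Complex.mul_conj' x, ← Complex.mul_conj' y]
    ring
  have hden : (1 : ℂ) - ‖x * y‖ ^ 2 = ((1 - (‖x‖ * ‖y‖) ^ 2 : ℝ) : ℂ) := by
    push_cast [norm_mul]
    ring
  have hnum_le : ‖x * ((1 - ‖y‖ ^ 2 : ℝ) : ℂ) + y * ((1 - ‖x‖ ^ 2 : ℝ) : ℂ)‖ ≤
      (‖x‖ + ‖y‖) * (1 - ‖x‖ * ‖y‖) := by
    refine (norm_add_le _ _).trans_eq ?_
    rw [norm_mul, norm_mul, Complex.norm_real, Complex.norm_real,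
      Real.norm_of_nonneg (by nlinarith), Real.norm_of_nonneg (by nlinarith)]
    ring
  have hden_pos : 0 < 1 - (‖x‖ * ‖y‖) ^ 2 := by nlinarith [mul_nonneg ha0 hb0]
  show ‖doubledMidpoint x y‖ < 1
  rw [doubledMidpoint, hnum, hden, norm_div, Complex.norm_real, Real.norm_of_nonneg hden_pos.le,
    div_lt_one hden_pos]
  calc _ ≤ (‖x‖ + ‖y‖) * (1 - ‖x‖ * ‖y‖) := hnum_le
    _ < (1 + ‖x‖ * ‖y‖) * (1 - ‖x‖ * ‖y‖) := by
      have hsum : ‖x‖ + ‖y‖ < 1 + ‖x‖ * ‖y‖ := by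
        nlinarith [mul_pos (sub_pos.2 ha) (sub_pos.2 hb)]
      exact mul_lt_mul_of_pos_right hsum (sub_pos.2 hab)
    _ = 1 - (‖x‖ * ‖y‖) ^ 2 := by ring

lemma norm_hypDouble (m : ℂ) : ‖hypDouble m‖ = 2 * ‖m‖ / (1 + ‖m‖ ^ 2) := by
  have : (1 + ‖m‖ ^ 2 : ℂ) = ((1 + ‖m‖ ^ 2 : ℝ) : ℂ) := by push_cast; rfl
  rw [hypDouble, this, norm_div, norm_mul, Complex.norm_real, Complex.norm_two,
    Real.norm_of_nonneg (by positivity)]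

lemma hypDouble_injOn : Set.InjOn hypDouble Disc := by
  intro m hm m' hm' h
  have hnorm : ‖m‖ = ‖m'‖ := by
    have h₁ := congrArg norm h
    rw [norm_hypDouble, norm_hypDouble, div_eq_div_iff (by positivity) (by positivity)] at h₁
    have h₂ : (‖m‖ - ‖m'‖) * (1 - ‖m‖ * ‖m'‖) = 0 := by linear_combination h₁ / 2
    have h₃ : 1 - ‖m‖ * ‖m'‖ ≠ 0 := by
      rw [← norm_mul]
      exact (sub_pos.2 (norm_mul_lt_one hm hm')).ne'
    exact sub_eq_zero.1 ((mul_eq_zero.1 h₂).resolve_right h₃)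
  rw [hypDouble, hypDouble, ← hnorm, div_left_inj' (one_add_sq_norm_ne_zero m)] at h
  exact mul_left_cancel₀ two_ne_zero h

lemma hypDouble_surjOn : Set.SurjOn hypDouble Disc Disc := by
  intro w (hw : ‖w‖ < 1)
  set u := √(1 - ‖w‖ ^ 2)
  have hu : u ^ 2 = 1 - ‖w‖ ^ 2 := Real.sq_sqrt (by nlinarith [norm_nonneg w])
  have hu0 : 0 < u := Real.sqrt_pos.2 (by nlinarith [norm_nonneg w])
  have hnorm : ‖w / (1 + u : ℝ)‖ = ‖w‖ / (1 + u) := by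
    rw [norm_div, Complex.norm_real, Real.norm_of_nonneg (by positivity)]
  refine ⟨w / (1 + u : ℝ), ?_, ?_⟩
  · show ‖_‖ < 1
    rw [hnorm, div_lt_one (by positivity)]
    linarith
  · have hu' : ((‖w‖ : ℝ) : ℂ) ^ 2 = 1 - (u : ℂ) ^ 2 := by
      exact_mod_cast (by linarith : ‖w‖ ^ 2 = 1 - u ^ 2)
    have h1u : (1 + u : ℂ) ≠ 0 := by exact_mod_cast (by positivity : (1 + u : ℝ) ≠ 0)
    rw [hypDouble, hnorm]
    push_cast
    have hden : (1 : ℂ) + (1 - u ^ 2) / (1 + u) ^ 2 = 2 / (1 + u) := by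
      field_simp
      ring
    rw [div_pow, hu', hden]
    field_simp

lemma phi_eq_neg_phi_iff_hypDouble_eq {m x y : ℂ} (hm : m ∈ Disc) (hx : x ∈ Disc)
    (hy : y ∈ Disc) : phi m x = -phi m y ↔ hypDouble m = doubledMidpoint x y :=
  (phi_eq_neg_phi_iff (one_sub_conj_mul_ne_zero hm hx) (one_sub_conj_mul_ne_zero hm hy)).trans
    (midpoint_equation_iff_hypDouble_eq (norm_mul_lt_one hx hy).ne)

/-- Existence and uniqueness of the geodesic midpoint: for every pair
`x, y` in the unit disc there is exactly one `m` in the disc with `φ_m(x) = -φ_m(y)`. -/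
theorem stmt10 (x : ℂ) (hx : x ∈ Disc) (y : ℂ) (hy : y ∈ Disc) :
    ∃! m : ℂ, m ∈ Disc ∧ phi m x = -(phi m y) := by
  obtain ⟨m, hm, hmw⟩ := hypDouble_surjOn (doubledMidpoint_mem_disc hx hy)
  refine ⟨m, ⟨hm, (phi_eq_neg_phi_iff_hypDouble_eq hm hx hy).2 hmw⟩, ?_⟩
  rintro m' ⟨hm', hm'xy⟩
  exact hypDouble_injOn hm' hm
    (((phi_eq_neg_phi_iff_hypDouble_eq hm' hx hy).1 hm'xy).trans hmw.symm)
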